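/- arXiv:1503.03831 — 3 statements merged into one kernel-verified Lean document; each statement's English description precedes it below -/
import Mathlib

section
/- Let B be a commutative ring and A a commutative B-algebra that is nonzero and finite free as a B-module, and let N : A → B denote the norm (N(φ) is the determinant of the B-linear endomorphism of A given by multiplication by φ). Then for every φ ∈ A and every prime ideal P of B, one has N(φ) ∈ P if and only if there exists a prime ideal Q of A lying over P (i.e. the preimage of Q under the structure map B → A equals P) with φ ∈ Q. -/
/-!
If `algebraMap b = φ a`, taking norms gives `b ^ n = N φ * N a`, so `N φ ∈ P` forces
`(φ) ∩ B ⊆ P`, and going up for the integral extension `B → A` produces a prime over `P`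
containing `φ`. Conversely, Cayley–Hamilton for multiplication by `φ` shows that `φ` divides
`N φ` in `A`, so any prime containing `φ` contains `N φ`.
-/

namespace Algebra

variable {B A : Type*} [CommRing B] [CommRing A] [Algebra B A]

theorem dvd_algebraMap_norm_self [Module.Free B A] [Module.Finite B A] (φ : A) :
    φ ∣ algebraMap B A (norm B φ) := by
  have hcoeff : φ ∣ algebraMap B A ((lmul B A φ).charpoly.coeff 0) := by
    have h := map_dvd (Polynomial.aeval φ) (Polynomial.X_dvd_sub_C (p := (lmul B A φ).charpoly))
    rwa [map_sub, aeval_self_charpoly_lmul, Polynomial.aeval_X, Polynomial.aeval_C, zero_sub,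
      dvd_neg] at h
  rw [norm_apply, LinearMap.det_eq_sign_charpoly_coeff, map_mul]
  exact hcoeff.mul_left _

theorem comap_span_singleton_le_of_norm_mem [Module.Free B A] {P : Ideal B} [P.IsPrime]
    {φ : A} (hφ : norm B φ ∈ P) : (Ideal.span {φ}).comap (algebraMap B A) ≤ P := by
  intro b hb
  obtain ⟨a, ha⟩ := Ideal.mem_span_singleton'.mp (Ideal.mem_comap.mp hb)
  have hpow : b ^ Module.finrank B A = norm B a * norm B φ := by
    rw [← Algebra.norm_algebraMap, ← ha, map_mul]
  exact ‹P.IsPrime›.mem_of_pow_mem _ (hpow ▸ P.mul_mem_left _ hφ)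

end Algebra

theorem norm_mem_prime_iff_exists_prime_over_general
    (B A : Type*) [CommRing B] [CommRing A] [Algebra B A]
    [Module.Free B A] [Module.Finite B A]
    (N : A → B) (hN : ∀ φ : A, N φ = LinearMap.det (LinearMap.mul B A φ))
    (φ : A) (P : Ideal B) (hP : P.IsPrime) :
    N φ ∈ P ↔
      ∃ Q : Ideal A, Q.IsPrime ∧ Q.comap (algebraMap B A) = P ∧ φ ∈ Q := by
  rw [show N φ = Algebra.norm B φ from hN φ]
  constructor
  · intro hφ
    obtain ⟨Q, hφQ, hQ, hQP⟩ := Ideal.exists_ideal_over_prime_of_isIntegral P _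
      (Algebra.comap_span_singleton_le_of_norm_mem hφ)
    exact ⟨Q, hQ, hQP, hφQ (Ideal.mem_span_singleton_self φ)⟩
  · rintro ⟨Q, -, rfl, hφQ⟩
    exact Ideal.mem_comap.mpr (Ideal.mem_of_dvd _ (Algebra.dvd_algebraMap_norm_self φ) hφQ)

/-- Let `B` be a commutative ring and `A` a commutative `B`-algebra that is
nonzero and finite free as a `B`-module, and let `N : A → B` be the norm, i.e. `N φ` is the
determinant of the `B`-linear endomorphism of `A` given by multiplication by `φ`.  Then for every
`φ ∈ A` and every prime ideal `P` of `B`, one has `N φ ∈ P` if and only if there exists a prime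
ideal `Q` of `A` lying over `P` with `φ ∈ Q`. -/
theorem norm_mem_prime_iff_exists_prime_over
    (B A : Type*) [CommRing B] [CommRing A] [Algebra B A]
    [Nontrivial A] [Module.Free B A] [Module.Finite B A]
    (N : A → B) (hN : ∀ φ : A, N φ = LinearMap.det (LinearMap.mul B A φ))
    (φ : A) (P : Ideal B) (hP : P.IsPrime) :
    N φ ∈ P ↔
      ∃ Q : Ideal A, Q.IsPrime ∧ Q.comap (algebraMap B A) = P ∧ φ ∈ Q :=
  norm_mem_prime_iff_exists_prime_over_general B A N hN φ P hP
end

section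
/- Let K ⊆ F be fields, v a discrete valuation on F trivial on K, and (V_n)_{n∈ℕ} a section system in F over K with respect to v. Suppose V_0 ≠ V_1 and let x ∈ V_1 \ V_0. Then for every n ≥ 1, if w ∈ V_n and x·w ∈ V_n, then w ∈ V_{n-1}. Consequently multiplication by x induces a well-defined injective K-linear map V_n / V_{n-1} → V_{n+1} / V_n, and hence dim_K V_{n+1} − dim_K V_n ≥ dim_K V_n − dim_K V_{n-1} for all n ≥ 1 (the sequence of successive dimension increments is nondecreasing). -/
set_option maxHeartbeats 1000000


/-- A discrete valuation on a field `F` which is trivial on a subfield `K`: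
a function `v` on nonzero elements of `F` with `v (f*g) = v f + v g`,
`v (f+g) ≥ min (v f) (v g)` whenever `f, g, f+g` are all nonzero, and `v c = 0`
for every nonzero `c` coming from `K`. -/
structure IsDiscreteValuationTrivialOn (K F : Type*) [Field K] [Field F] [Algebra K F]
    (v : F → ℤ) : Prop where
  map_mul : ∀ f g : F, f ≠ 0 → g ≠ 0 → v (f * g) = v f + v g
  min_le_map_add : ∀ f g : F, f ≠ 0 → g ≠ 0 → f + g ≠ 0 → min (v f) (v g) ≤ v (f + g)
  trivial_on_base : ∀ c : K, c ≠ 0 → v (algebraMap K F c) = 0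

/-- A section system in `F` over `K` with respect to `v` (abstracting the section ring
`⊕ₙ H⁰(X, nL)` of an effective divisor `L`, with `v` the order of vanishing along a
component of `L`): a family of finite-dimensional `K`-subspaces `Vₙ ⊆ F` with `V₀ = K·1`,
`Vₙ ⊆ Vₙ₊₁`, `Vₘ · Vₙ ⊆ Vₘ₊ₙ`, and for all `n ≥ 1`,
`Vₙ₋₁ = { f ∈ Vₙ : f = 0 or v f ≥ -(n-1) }`. -/
structure IsSectionSystem (K F : Type*) [Field K] [Field F] [Algebra K F]
    (v : F → ℤ) (V : ℕ → Submodule K F) : Prop where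
  finiteDimensional : ∀ n, FiniteDimensional K (V n)
  zeroth : V 0 = Submodule.span K {1}
  mono : ∀ n, V n ≤ V (n + 1)
  mul_mem : ∀ m n : ℕ, ∀ f ∈ V m, ∀ g ∈ V n, f * g ∈ V (m + n)
  valuation_cut : ∀ (n : ℕ) (f : F), f ∈ V n ↔ f ∈ V (n + 1) ∧ (f = 0 ∨ -(n : ℤ) ≤ v f)

/-- Let `K ⊆ F` be fields, `v` a discrete valuation on `F` trivial on `K`,
and `(Vₙ)` a section system in `F` over `K` with respect to `v`.  Suppose `V₀ ≠ V₁` and let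
`x ∈ V₁ \ V₀`.  Then for every `n ≥ 1`, if `w ∈ Vₙ` and `x·w ∈ Vₙ`, then `w ∈ Vₙ₋₁`.
Consequently multiplication by `x` induces a well-defined injective `K`-linear map
`Vₙ₊₁/Vₙ → Vₙ₊₂/Vₙ₊₁`, and hence the sequence of successive dimension increments
`dim Vₙ₊₁ − dim Vₙ` is nondecreasing. -/
theorem sectionSystem_increments_nondecreasing
    (K F : Type*) [Field K] [Field F] [Algebra K F]
    (v : F → ℤ) (hv : IsDiscreteValuationTrivialOn K F v)
    (V : ℕ → Submodule K F) (hV : IsSectionSystem K F v V)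
    (hne : V 0 ≠ V 1) (x : F) (hx1 : x ∈ V 1) (hx0 : x ∉ V 0) :
    (∀ n : ℕ, ∀ w ∈ V (n + 1), x * w ∈ V (n + 1) → w ∈ V n) ∧
    (∀ n : ℕ, ∃ φ : (↥(V (n + 1)) ⧸ (V n).comap (V (n + 1)).subtype) →ₗ[K]
        (↥(V (n + 2)) ⧸ (V (n + 1)).comap (V (n + 2)).subtype),
      Function.Injective φ ∧
        ∀ (w : F) (hw : w ∈ V (n + 1)) (hxw : x * w ∈ V (n + 2)),
          φ (Submodule.Quotient.mk ⟨w, hw⟩) = Submodule.Quotient.mk ⟨x * w, hxw⟩) ∧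
    (∀ n : ℕ, Module.finrank K (V (n + 1)) - Module.finrank K (V n) ≤
      Module.finrank K (V (n + 2)) - Module.finrank K (V (n + 1))) := by
  have hxne : x ≠ 0 := fun h => hx0 ((hV.valuation_cut 0 x).mpr ⟨hx1, Or.inl h⟩)
  have hxv : v x ≤ -1 := by
    by_contra h
    push_neg at h
    exact hx0 ((hV.valuation_cut 0 x).mpr ⟨hx1, Or.inr (by omega)⟩)
  have key : ∀ n : ℕ, ∀ w ∈ V (n + 1), x * w ∈ V (n + 1) → w ∈ V n := by
    intro n w hw hxw
    by_cases hw0 : w = 0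
    · subst hw0; exact (V n).zero_mem
    have hxw0 : x * w ≠ 0 := mul_ne_zero hxne hw0
    have h1 := ((hV.valuation_cut (n + 1) (x * w)).mp hxw).2
    have hvxw : -((n : ℤ) + 1) ≤ v (x * w) := by
      rcases h1 with h | h
      · exact absurd h hxw0
      · push_cast at h; linarith
    rw [hv.map_mul x w hxne hw0] at hvxw
    exact (hV.valuation_cut n w).mpr ⟨hw, Or.inr (by linarith)⟩
  have hquot : ∀ n : ℕ, ∃ φ : (↥(V (n + 1)) ⧸ (V n).comap (V (n + 1)).subtype) →ₗ[K]
        (↥(V (n + 2)) ⧸ (V (n + 1)).comap (V (n + 2)).subtype),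
      Function.Injective φ ∧
        ∀ (w : F) (hw : w ∈ V (n + 1)) (hxw : x * w ∈ V (n + 2)),
          φ (Submodule.Quotient.mk ⟨w, hw⟩) = Submodule.Quotient.mk ⟨x * w, hxw⟩ := by
    intro n
    have hmul : ∀ w : F, w ∈ V (n + 1) → x * w ∈ V (n + 2) := by
      intro w hw
      have := hV.mul_mem 1 (n + 1) x hx1 w hw
      simpa [show 1 + (n + 1) = n + 2 by omega] using this
    let g : ↥(V (n + 1)) →ₗ[K] ↥(V (n + 2)) :=
      { toFun := fun w => ⟨x * w, hmul w w.2⟩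
        map_add' := by intro a b; ext; simp [mul_add]
        map_smul' := by intro c a; ext; simp [mul_smul_comm] }
    let f : ↥(V (n + 1)) →ₗ[K] (↥(V (n + 2)) ⧸ (V (n + 1)).comap (V (n + 2)).subtype) :=
      (Submodule.mkQ _).comp g
    have hker : (V n).comap (V (n + 1)).subtype ≤ LinearMap.ker f := by
      intro w hw
      have hxw : x * (w : F) ∈ V (n + 1) := by
        have := hV.mul_mem 1 n x hx1 (w : F) hw
        simpa [show 1 + n = n + 1 by omega] using this
      simp only [f, LinearMap.mem_ker, LinearMap.comp_apply, Submodule.mkQ_apply,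
        Submodule.Quotient.mk_eq_zero, Submodule.mem_comap]
      exact hxw
    refine ⟨Submodule.liftQ _ f hker, ?_, ?_⟩
    · rw [← LinearMap.ker_eq_bot, Submodule.ker_liftQ_eq_bot]
      intro w hw
      simp only [f, LinearMap.mem_ker, LinearMap.comp_apply, Submodule.mkQ_apply,
        Submodule.Quotient.mk_eq_zero, Submodule.mem_comap] at hw
      exact key n (w : F) w.2 hw
    · intro w hw hxw
      rfl
  refine ⟨key, hquot, ?_⟩
  intro n
  haveI := hV.finiteDimensional n
  haveI := hV.finiteDimensional (n + 1)
  haveI := hV.finiteDimensional (n + 2)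
  obtain ⟨φ, hφ, -⟩ := hquot n
  have h1 : Module.finrank K (↥(V (n + 1)) ⧸ (V n).comap (V (n + 1)).subtype)
      + Module.finrank K ((V n).comap (V (n + 1)).subtype) = Module.finrank K (V (n + 1)) :=
    Submodule.finrank_quotient_add_finrank _
  have h2 : Module.finrank K (↥(V (n + 2)) ⧸ (V (n + 1)).comap (V (n + 2)).subtype)
      + Module.finrank K ((V (n + 1)).comap (V (n + 2)).subtype) = Module.finrank K (V (n + 2)) :=
    Submodule.finrank_quotient_add_finrank _
  have e1 : Module.finrank K ((V n).comap (V (n + 1)).subtype) = Module.finrank K (V n) :=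
    (Submodule.comapSubtypeEquivOfLe (hV.mono n)).finrank_eq
  have e2 : Module.finrank K ((V (n + 1)).comap (V (n + 2)).subtype)
      = Module.finrank K (V (n + 1)) :=
    (Submodule.comapSubtypeEquivOfLe (hV.mono (n + 1))).finrank_eq
  have hle := LinearMap.finrank_le_finrank_of_injective hφ
  have hm1 : Module.finrank K (V n) ≤ Module.finrank K (V (n + 1)) :=
    Submodule.finrank_mono (hV.mono n)
  have hm2 : Module.finrank K (V (n + 1)) ≤ Module.finrank K (V (n + 2)) :=
    Submodule.finrank_mono (hV.mono (n + 1))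
  omega
end

section
/- Let K ⊆ F be fields, v a discrete valuation on F trivial on K, and (V_n)_{n∈ℕ} a section system in F over K with respect to v. Suppose V_0 ≠ V_1 and that there exists B ∈ ℕ such that dim_K V_n ≤ B·n for all n ≥ 1. Then the graded K-subalgebra R = ⊕_{n∈ℕ} V_n·Xⁿ of the polynomial ring F[X] (the K-subalgebra of F[X] consisting of polynomials whose degree-n coefficient lies in V_n for every n) is a finitely generated K-algebra. -/
open Polynomial Module Submodule in
/-- Let `K ⊆ F` be fields, `v` a discrete valuation on `F` trivial on `K`,
and `(Vₙ)` a section system in `F` over `K` with respect to `v`.  Suppose `V₀ ≠ V₁` and that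
there is `B : ℕ` with `dim_K Vₙ ≤ B·n` for all `n ≥ 1`.  Then the graded `K`-subalgebra
`R = ⊕ₙ Vₙ·Xⁿ` of the polynomial ring `F[X]` — the `K`-subalgebra of `F[X]` consisting of the
polynomials whose degree-`n` coefficient lies in `Vₙ` for every `n` — is a finitely generated
`K`-algebra: there is a finite set of polynomials whose adjoined `K`-subalgebra is exactly
`{p : F[X] | ∀ n, p.coeff n ∈ Vₙ}`. -/
theorem sectionSystem_ring_finitely_generated
    (K F : Type*) [Field K] [Field F] [Algebra K F]
    (v : F → ℤ) (hv : IsDiscreteValuationTrivialOn K F v)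
    (V : ℕ → Submodule K F) (hV : IsSectionSystem K F v V)
    (hne : V 0 ≠ V 1)
    (B : ℕ) (hB : ∀ n : ℕ, 1 ≤ n → Module.finrank K (V n) ≤ B * n) :
    ∃ s : Finset (Polynomial F),
      ∀ p : Polynomial F,
        p ∈ Algebra.adjoin K (↑s : Set (Polynomial F)) ↔ ∀ n : ℕ, p.coeff n ∈ V n := by
  classical
  haveI I1 : ∀ n, FiniteDimensional K (V n) := hV.finiteDimensional
  -- basic facts
  have hVmono : Monotone V := monotone_nat_of_le_succ hV.mono
  have hone : ∀ n, (1 : F) ∈ V n := by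
    intro n
    refine hVmono (Nat.zero_le n) ?_
    rw [hV.zeroth]
    exact Submodule.mem_span_singleton_self 1
  -- pick x ∈ V 1 \ V 0
  obtain ⟨x, hx1, hx0⟩ := SetLike.exists_of_lt (lt_of_le_of_ne (hV.mono 0) hne)
  have hx_ne : x ≠ 0 := fun h => hx0 (h ▸ (V 0).zero_mem)
  have hvx : v x ≤ -1 := by
    have h0 : ¬(x = 0 ∨ -((0 : ℕ) : ℤ) ≤ v x) := fun h =>
      hx0 ((hV.valuation_cut 0 x).2 ⟨by simpa using hx1, h⟩)
    push_neg at h0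
    have := h0.2
    omega
  -- step-down lemma
  have stepdown : ∀ (n : ℕ) (f : F), f ∈ V (n + 1) → x * f ∈ V (n + 1) → f ∈ V n := by
    intro n f hf hxf
    rcases eq_or_ne f 0 with rfl | hf0
    · exact (V n).zero_mem
    refine (hV.valuation_cut n f).2 ⟨hf, Or.inr ?_⟩
    have hxf0 : x * f ≠ 0 := mul_ne_zero hx_ne hf0
    have h1 : -((n + 1 : ℕ) : ℤ) ≤ v (x * f) :=
      (((hV.valuation_cut (n + 1) (x * f)).1 hxf).2).resolve_left hxf0
    rw [hv.map_mul x f hx_ne hf0] at h1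
    push_cast at h1 ⊢
    omega
  -- multiplication by x as a linear map
  set μ : F →ₗ[K] F := LinearMap.mulLeft K x with hμdef
  have hμ : Function.Injective μ := fun a b h => mul_right_injective₀ hx_ne h
  have hμapp : ∀ g : F, μ g = x * g := fun g => rfl
  have hmulx : ∀ n, ∀ g ∈ V n, x * g ∈ V (n + 1) := by
    intro n g hg
    have := hV.mul_mem 1 n x hx1 g hg
    rwa [Nat.add_comm] at this
  -- the intersection computation
  have infEq : ∀ n, (Submodule.map μ (V (n + 1))) ⊓ V (n + 1) = Submodule.map μ (V n) := by
    intro n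
    apply le_antisymm
    · rintro a ⟨⟨g, hg, rfl⟩, h2⟩
      exact ⟨g, stepdown n g hg (by rwa [hμapp] at h2), rfl⟩
    · rintro a ⟨g, hg, rfl⟩
      exact ⟨⟨g, hV.mono n hg, rfl⟩, by rw [hμapp]; exact hmulx n g hg⟩
  have frmap : ∀ n, finrank K (Submodule.map μ (V n)) = finrank K (V n) :=
    fun n => (Submodule.equivMapOfInjective μ hμ (V n)).finrank_eq.symm
  have hmonoE : ∀ n, finrank K (V n) ≤ finrank K (V (n + 1)) := by
    intro n
    haveI := I1 (n + 1)
    exact Submodule.finrank_mono (hV.mono n)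
  -- growth inequality and equality criterion
  have growth : ∀ n, 2 * finrank K (V (n + 1)) ≤ finrank K (V (n + 2)) + finrank K (V n) ∧
      (finrank K (V (n + 2)) + finrank K (V n) = 2 * finrank K (V (n + 1)) →
        V (n + 2) = Submodule.map μ (V (n + 1)) ⊔ V (n + 1)) := by
    intro n
    haveI := I1 n; haveI := I1 (n + 1); haveI := I1 (n + 2)
    have hsup := Submodule.finrank_sup_add_finrank_inf_eq (Submodule.map μ (V (n + 1))) (V (n + 1))
    rw [infEq n, frmap (n + 1), frmap n] at hsup
    have hle : Submodule.map μ (V (n + 1)) ⊔ V (n + 1) ≤ V (n + 2) := by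
      refine sup_le ?_ (hV.mono (n + 1))
      rintro a ⟨g, hg, rfl⟩
      rw [hμapp]
      exact hmulx (n + 1) g hg
    have h2 : finrank K (Submodule.map μ (V (n + 1)) ⊔ V (n + 1) : Submodule K F) ≤
        finrank K (V (n + 2)) := Submodule.finrank_mono hle
    constructor
    · omega
    · intro heq
      exact (Submodule.eq_of_le_of_finrank_eq hle (by omega)).symm
  -- increments
  let c : ℕ → ℕ := fun n => finrank K (V (n + 1)) - finrank K (V n)
  have hc : ∀ n, c n = finrank K (V (n + 1)) - finrank K (V n) := fun _ => rfl
  have cmono : Monotone c := by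
    apply monotone_nat_of_le_succ
    intro n
    have h1 := (growth n).1
    have h2 := hmonoE n
    have h3 := hmonoE (n + 1)
    have h8 : finrank K (V (n + 1 + 1)) = finrank K (V (n + 2)) := rfl
    rw [hc, hc]
    omega
  have cbound : ∀ n, c n ≤ B := by
    intro n
    by_contra hcb
    push_neg at hcb
    have hstep : ∀ m, finrank K (V n) + c n * m ≤ finrank K (V (n + m)) := by
      intro m
      induction m with
      | zero => simp
      | succ m ih =>
        have h1 := hc (n + m)
        have h2 := hmonoE (n + m)
        have h3 : c n ≤ c (n + m) := cmono (Nat.le_add_right n m)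
        have : n + (m + 1) = (n + m) + 1 := by omega
        rw [this, Nat.mul_succ]
        omega
    have hcontr := hstep (B * n + 1)
    have hBn := hB (n + (B * n + 1)) (by omega)
    have hkey : (B + 1) * (B * n + 1) ≤ B * (n + (B * n + 1)) := by
      calc (B + 1) * (B * n + 1) ≤ c n * (B * n + 1) := Nat.mul_le_mul_right _ (by omega)
        _ ≤ finrank K (V n) + c n * (B * n + 1) := Nat.le_add_left _ _
        _ ≤ finrank K (V (n + (B * n + 1))) := hcontr
        _ ≤ B * (n + (B * n + 1)) := hBn
    have h1 : (B + 1) * (B * n + 1) = B * (n + (B * n + 1)) + 1 := by ring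
    rw [h1] at hkey
    exact Nat.not_succ_le_self _ hkey
  -- c is eventually constant
  have hevc : ∃ N, ∀ n, N ≤ n → c n = c N := by
    by_contra hcon
    push_neg at hcon
    choose g hg1 hg2 using hcon
    have hlt : ∀ N, c N < c (g N) := fun N => lt_of_le_of_ne (cmono (hg1 N)) (Ne.symm (hg2 N))
    have hiter : ∀ k, k ≤ c (g^[k] 0) := by
      intro k
      induction k with
      | zero => exact Nat.zero_le _
      | succ k ih =>
        rw [Function.iterate_succ_apply']
        exact lt_of_le_of_lt ih (hlt _)
    have := hiter (B + 1)
    have := cbound (g^[B + 1] 0)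
    omega
  obtain ⟨N, hN⟩ := hevc
  have hgen : ∀ n, N ≤ n → V (n + 2) = Submodule.map μ (V (n + 1)) ⊔ V (n + 1) := by
    intro n hn
    apply (growth n).2
    have h1 := hN n hn
    have h2 := hN (n + 1) (by omega)
    have h3 := hc n
    have h4 := hc (n + 1)
    have h5 := hmonoE n
    have h6 := hmonoE (n + 1)
    have h7 := (growth n).1
    have h8 : finrank K (V (n + 1 + 1)) = finrank K (V (n + 2)) := rfl
    omega
  have hgen' : ∀ n, N + 1 ≤ n → V (n + 1) = Submodule.map μ (V n) ⊔ V n := by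
    intro n hn
    obtain ⟨m, rfl⟩ : ∃ m, n = m + 1 := ⟨n - 1, by omega⟩
    exact hgen m (by omega)
  -- finite spanning sets
  have hfg : ∀ n, ∃ S : Finset F, Submodule.span K (↑S : Set F) = V n :=
    fun n => (Submodule.fg_iff_finiteDimensional (V n)).2 (I1 n)
  choose t ht using hfg
  -- the generating set
  set s : Finset (Polynomial F) :=
    insert X ((Finset.range (N + 2)).biUnion fun n => (t n).image fun f => C f * X ^ n) with hsdef
  have hXs : (X : Polynomial F) ∈ Algebra.adjoin K (↑s : Set (Polynomial F)) :=
    Algebra.subset_adjoin (by simp [hsdef])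
  have hts : ∀ n, n ≤ N + 1 → ∀ g ∈ t n,
      (C g * X ^ n : Polynomial F) ∈ Algebra.adjoin K (↑s : Set (Polynomial F)) := by
    intro n hn g hg
    apply Algebra.subset_adjoin
    simp only [hsdef, Finset.coe_insert, Set.mem_insert_iff, Finset.mem_coe,
      Finset.mem_biUnion, Finset.mem_range, Finset.mem_image]
    exact Or.inr ⟨n, by omega, g, hg, rfl⟩
  -- the subalgebra of polynomials with coefficients in the section system
  let R : Subalgebra K (Polynomial F) :=
    { carrier := {p : Polynomial F | ∀ n, p.coeff n ∈ V n}
      zero_mem' := by intro n; simp only [coeff_zero]; exact (V n).zero_mem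
      one_mem' := by
        intro n
        rw [coeff_one]
        split_ifs with h
        · exact hone n
        · exact (V n).zero_mem
      add_mem' := by
        intro p q hp hq n
        rw [coeff_add]
        exact (V n).add_mem (hp n) (hq n)
      mul_mem' := by
        intro p q hp hq n
        rw [coeff_mul]
        apply Submodule.sum_mem
        rintro ⟨i, j⟩ hij
        have hij' : i + j = n := Finset.HasAntidiagonal.mem_antidiagonal.1 hij
        have := hV.mul_mem i j _ (hp i) _ (hq j)
        rwa [hij'] at this
      algebraMap_mem' := by
        intro r n
        rw [Polynomial.algebraMap_apply, coeff_C]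
        split_ifs with h
        · subst h
          rw [hV.zeroth, Algebra.algebraMap_eq_smul_one]
          exact Submodule.smul_mem _ r (Submodule.mem_span_singleton_self 1)
        · exact (V n).zero_mem }
  have hsR : (↑s : Set (Polynomial F)) ⊆ R := by
    intro p hp
    simp only [hsdef, Finset.coe_insert, Set.mem_insert_iff, Finset.mem_coe,
      Finset.mem_biUnion, Finset.mem_range, Finset.mem_image] at hp
    rcases hp with rfl | ⟨k, _, g, hg, rfl⟩
    · intro n
      rw [coeff_X]
      split_ifs with h
      · subst h; exact hone 1
      · exact (V n).zero_mem
    · intro n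
      rw [coeff_C_mul, coeff_X_pow]
      split_ifs with h
      · subst h
        rw [mul_one]
        rw [← ht n]
        exact Submodule.subset_span hg
      · rw [mul_zero]; exact (V n).zero_mem
  have hforward : ∀ p ∈ Algebra.adjoin K (↑s : Set (Polynomial F)), ∀ n, p.coeff n ∈ V n :=
    fun p hp => Algebra.adjoin_le hsR hp
  -- every C f * X^n with f ∈ V n lies in the adjoin
  have hlin : ∀ (n : ℕ), ∀ f ∈ V n,
      (C f * X ^ n : Polynomial F) ∈ Algebra.adjoin K (↑s : Set (Polynomial F)) := by
    intro n
    induction n using Nat.strong_induction_on with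
    | _ n ih =>
      intro f hf
      by_cases hn : n ≤ N + 1
      · -- use the spanning set
        let φ : F →ₗ[K] Polynomial F :=
          { toFun := fun g => C g * X ^ n
            map_add' := by intro a b; simp [add_mul]
            map_smul' := by
              intro r a
              simp only [RingHom.id_apply, Algebra.smul_def, Polynomial.algebraMap_apply,
                map_mul, mul_assoc] }
        have hsub : V n ≤ Submodule.comap φ
            (Subalgebra.toSubmodule (Algebra.adjoin K (↑s : Set (Polynomial F)))) := by
          rw [← ht n, Submodule.span_le]
          intro g hg
          exact hts n hn g hg
        exact hsub hf
      · push_neg at hn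
        obtain ⟨m, rfl⟩ : ∃ m, n = m + 1 := ⟨n - 1, by omega⟩
        have hm : N + 1 ≤ m := by omega
        rw [hgen' m hm] at hf
        obtain ⟨a, ha, b, hb, rfl⟩ := Submodule.mem_sup.1 hf
        obtain ⟨g, hg, rfl⟩ := ha
        have h1 := ih m (by omega) g hg
        have h2 := ih m (by omega) b hb
        have hx' : (C x * X : Polynomial F) ∈ Algebra.adjoin K (↑s : Set (Polynomial F)) := by
          have := ih 1 (by omega) x hx1
          rwa [pow_one] at this
        have heq : (C (μ g + b) * X ^ (m + 1) : Polynomial F) =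
            (C x * X) * (C g * X ^ m) + X * (C b * X ^ m) := by
          rw [hμapp]
          push_cast [map_add, map_mul]
          ring
        rw [heq]
        exact add_mem (mul_mem hx' h1) (mul_mem hXs h2)
  refine ⟨s, fun p => ⟨hforward p, ?_⟩⟩
  intro hp
  rw [← Polynomial.sum_C_mul_X_pow_eq p, Polynomial.sum_def]
  exact Subalgebra.sum_mem _ fun n _ => hlin n _ (hp n)
end
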